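/- Let A and B be positive definite d×d real matrices with A ≤ B in the Loewner order, and let x ∈ ℝ^d. Then log det(A + x xᵀ) − log det(A) ≥ log det(B + x xᵀ) − log det(B). -/

import Mathlib

/-!
By the matrix determinant lemma, `log det (M + x xᵀ) - log det M = log (1 + xᵀ M⁻¹ x)`, so it
suffices that `M ↦ xᵀ M⁻¹ x` is antitone in the Loewner order. This follows from the variational
formula `xᵀ A⁻¹ x = max_v (2 vᵀx - vᵀ A v)` (the maximum is attained at `v = A⁻¹ x`): enlarging
`A` to `B` decreases every term `2 vᵀx - vᵀ A v`.
-/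

open Matrix

namespace Matrix

variable {n : Type*} [Fintype n] [DecidableEq n]

theorem det_add_vecMulVec {α : Type*} [CommRing α] {M : Matrix n n α} (hM : IsUnit M.det)
    (u v : n → α) : (M + vecMulVec u v).det = M.det * (1 + v ⬝ᵥ M⁻¹ *ᵥ u) := by
  rw [vecMulVec_eq Unit, det_add_replicateCol_mul_replicateRow hM,
    det_unique (1 + _ : Matrix Unit Unit α), Matrix.mul_assoc, ← replicateCol_mulVec,
    add_apply, one_apply_eq, replicateRow_mul_replicateCol_apply]

theorem PosDef.dotProduct_inv_mulVec_nonneg {M : Matrix n n ℝ} (hM : M.PosDef) (x : n → ℝ) :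
    0 ≤ x ⬝ᵥ M⁻¹ *ᵥ x := by
  simpa using hM.inv.posSemidef.dotProduct_mulVec_nonneg x

theorem PosDef.two_mul_dotProduct_sub_le {A : Matrix n n ℝ} (hA : A.PosDef) (v x : n → ℝ) :
    2 * (v ⬝ᵥ x) - v ⬝ᵥ A *ᵥ v ≤ x ⬝ᵥ A⁻¹ *ᵥ x := by
  set u := A⁻¹ *ᵥ x
  have hAu : A *ᵥ u = x := by
    rw [mulVec_mulVec, mul_nonsing_inv _ ((isUnit_iff_isUnit_det A).mp hA.isUnit), one_mulVec]
  have hsymm : u ⬝ᵥ A *ᵥ v = v ⬝ᵥ x := by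
    rw [dotProduct_mulVec, ← mulVec_transpose, (isHermitian_iff_isSymm.mp hA.isHermitian).eq, hAu,
      dotProduct_comm]
  have hsq := hA.posSemidef.dotProduct_mulVec_nonneg (v - u)
  simp only [star_trivial, mulVec_sub, sub_dotProduct, dotProduct_sub, hAu, hsymm] at hsq
  rw [dotProduct_comm u x] at hsq
  linarith

theorem dotProduct_inv_mulVec_le_of_posSemidef_sub {A B : Matrix n n ℝ} (hA : A.PosDef)
    (hB : IsUnit B.det) (hAB : (B - A).PosSemidef) (x : n → ℝ) :
    x ⬝ᵥ B⁻¹ *ᵥ x ≤ x ⬝ᵥ A⁻¹ *ᵥ x := by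
  set v := B⁻¹ *ᵥ x
  have hBv : B *ᵥ v = x := by rw [mulVec_mulVec, mul_nonsing_inv _ hB, one_mulVec]
  have hAB_v : v ⬝ᵥ A *ᵥ v ≤ v ⬝ᵥ B *ᵥ v := by
    simpa [sub_mulVec] using hAB.dotProduct_mulVec_nonneg v
  calc x ⬝ᵥ v = 2 * (v ⬝ᵥ x) - v ⬝ᵥ B *ᵥ v := by rw [hBv, dotProduct_comm]; ring
    _ ≤ 2 * (v ⬝ᵥ x) - v ⬝ᵥ A *ᵥ v := by linarith
    _ ≤ x ⬝ᵥ A⁻¹ *ᵥ x := hA.two_mul_dotProduct_sub_le v x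

theorem PosDef.log_det_add_vecMulVec_self_sub_log_det {M : Matrix n n ℝ} (hM : M.PosDef)
    (x : n → ℝ) :
    Real.log (M + vecMulVec x x).det - Real.log M.det = Real.log (1 + x ⬝ᵥ M⁻¹ *ᵥ x) := by
  have hquad := hM.dotProduct_inv_mulVec_nonneg x
  rw [det_add_vecMulVec hM.det_pos.ne'.isUnit, Real.log_mul hM.det_pos.ne' (by positivity)]
  ring

end Matrix

theorem logdet_gain_antitone {d : ℕ} (A B : Matrix (Fin d) (Fin d) ℝ)
    (hA : A.PosDef) (hB : B.PosDef) (hAB : (B - A).PosSemidef) (x : Fin d → ℝ) :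
    Real.log (A + vecMulVec x x).det - Real.log A.det ≥
      Real.log (B + vecMulVec x x).det - Real.log B.det := by
  rw [hA.log_det_add_vecMulVec_self_sub_log_det, hB.log_det_add_vecMulVec_self_sub_log_det]
  have hquad := hB.dotProduct_inv_mulVec_nonneg x
  have hinv := dotProduct_inv_mulVec_le_of_posSemidef_sub hA hB.det_pos.ne'.isUnit hAB x
  exact Real.log_le_log (by linarith) (by linarith)
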